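/- Let B be an N×N strongly infinitely divisible nonnegative matrix and Q a Z-matrix with exp(−Q) = B. If i ≠ j and B_{ij} = 0, then (Q^n)_{ij} = 0 for every positive integer n. -/

import Mathlib

/-!
For a Z-matrix `Q` and `c` large, `M = c • 1 - Q` is entrywise nonnegative and
`exp M = exp c • exp (-Q) = exp c • B`. Every term of the exponential series of `M` is
nonnegative, so `B i j = 0` forces `(M ^ n) i j = 0` for all `n`. Since `Q = c • 1 - M` is a
polynomial in `M`, every power of `Q` vanishes at `(i, j)` as well.
-/

open Matrix

/-- A real square matrix is (entrywise) nonnegative if all of its entries are nonnegative. -/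
def IsNonnegMatrix {ι : Type*} (B : Matrix ι ι ℝ) : Prop :=
  ∀ i j, 0 ≤ B i j

/-- A Z-matrix is a real square matrix all of whose off-diagonal entries are nonpositive. -/
def IsZMatrix {ι : Type*} (Q : Matrix ι ι ℝ) : Prop :=
  ∀ i j, i ≠ j → Q i j ≤ 0

/-- A nonnegative matrix `B` is infinitely divisible if for every positive integer `n`
there exists a nonnegative matrix `K` with `K ^ n = B`. -/
def IsInfinitelyDivisible {ι : Type*} [Fintype ι] [DecidableEq ι] (B : Matrix ι ι ℝ) : Prop :=
  ∀ n : ℕ, 0 < n → ∃ K : Matrix ι ι ℝ, IsNonnegMatrix K ∧ K ^ n = B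

/-- `B` is strongly infinitely divisible if it is infinitely divisible and `det B > 0`. -/
def IsStronglyInfinitelyDivisible {ι : Type*} [Fintype ι] [DecidableEq ι]
    (B : Matrix ι ι ℝ) : Prop :=
  IsInfinitelyDivisible B ∧ 0 < B.det

/-- An inverse M-matrix is an invertible nonnegative matrix whose inverse is a Z-matrix. -/
def IsInverseMMatrix {ι : Type*} [Fintype ι] [DecidableEq ι] (K : Matrix ι ι ℝ) : Prop :=
  IsUnit K.det ∧ IsNonnegMatrix K ∧ IsZMatrix K⁻¹

/-- A stochastic matrix is a nonnegative square matrix each of whose rows sums to `1`. -/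
def IsStochasticMatrix {ι : Type*} [Fintype ι] (P : Matrix ι ι ℝ) : Prop :=
  IsNonnegMatrix P ∧ ∀ i, ∑ j, P i j = 1

/-- An intensity matrix is a real square matrix whose off-diagonal entries are nonnegative
and each of whose rows sums to `0`. -/
def IsIntensityMatrix {ι : Type*} [Fintype ι] (R : Matrix ι ι ℝ) : Prop :=
  (∀ i j, i ≠ j → 0 ≤ R i j) ∧ ∀ i, ∑ j, R i j = 0

open NormedSpace

variable {ι : Type*}

theorem IsNonnegMatrix.one [DecidableEq ι] : IsNonnegMatrix (1 : Matrix ι ι ℝ) := fun i j => by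
  rw [Matrix.one_apply]; split_ifs <;> norm_num

variable [Fintype ι]

theorem IsNonnegMatrix.mul {A B : Matrix ι ι ℝ} (hA : IsNonnegMatrix A) (hB : IsNonnegMatrix B) :
    IsNonnegMatrix (A * B) := fun i j =>
  Finset.sum_nonneg fun k _ => mul_nonneg (hA i k) (hB k j)

variable [DecidableEq ι]

theorem IsNonnegMatrix.pow {A : Matrix ι ι ℝ} (hA : IsNonnegMatrix A) (n : ℕ) :
    IsNonnegMatrix (A ^ n) := by
  induction n with
  | zero => exact pow_zero A ▸ IsNonnegMatrix.one
  | succ n ih => exact pow_succ A n ▸ ih.mul hA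

theorem IsZMatrix.exists_isNonnegMatrix_smul_one_sub {Q : Matrix ι ι ℝ} (hQ : IsZMatrix Q) :
    ∃ c : ℝ, IsNonnegMatrix (c • 1 - Q) := by
  refine ⟨∑ k, |Q k k|, fun i j => ?_⟩
  rcases eq_or_ne i j with rfl | hij
  · have hdiag : Q i i ≤ ∑ k, |Q k k| :=
      (le_abs_self _).trans (Finset.single_le_sum (f := fun k => |Q k k|)
        (fun _ _ => abs_nonneg _) (Finset.mem_univ i))
    simpa using hdiag
  · simpa [Matrix.one_apply_ne hij] using hQ i j hij

theorem Matrix.hasSum_exp_apply (A : Matrix ι ι ℝ) (i j : ι) :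
    HasSum (fun n => (n.factorial⁻¹ : ℝ) * (A ^ n) i j) (exp A i j) := by
  open scoped Norms.Operator in
  have h := (exp_series_hasSum_exp' (𝕂 := ℝ) A).map (Matrix.entryLinearMap ℝ ℝ i j)
    (continuous_id.matrix_elem i j)
  simp only [Function.comp_def, Matrix.entryLinearMap_apply, Matrix.smul_apply, smul_eq_mul] at h
  exact h

theorem Matrix.exp_smul_one_add (c : ℝ) (A : Matrix ι ι ℝ) :
    exp (c • 1 + A) = Real.exp c • exp A := by
  have hc : exp (c • 1 : Matrix ι ι ℝ) = Real.exp c • 1 := by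
    open scoped Norms.Operator in
    have h := algebraMap_exp_comm (𝕂 := ℝ) (𝔸 := Matrix ι ι ℝ) c
    rw [Algebra.algebraMap_eq_smul_one, Algebra.algebraMap_eq_smul_one, ← Real.exp_eq_exp_ℝ] at h
    exact h.symm
  rw [Matrix.exp_add_of_commute _ _ ((Commute.one_left A).smul_left c), hc, smul_one_mul]

theorem IsNonnegMatrix.pow_apply_eq_zero_of_exp_apply_eq_zero {A : Matrix ι ι ℝ}
    (hA : IsNonnegMatrix A) {i j : ι} (h : exp A i j = 0) (n : ℕ) : (A ^ n) i j = 0 := by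
  have hterm : ∀ m : ℕ, 0 ≤ (m.factorial⁻¹ : ℝ) * (A ^ m) i j := fun m =>
    mul_nonneg (by positivity) (hA.pow m i j)
  have hle : (n.factorial⁻¹ : ℝ) * (A ^ n) i j ≤ 0 :=
    h ▸ le_hasSum (A.hasSum_exp_apply i j) n fun m _ => hterm m
  exact (mul_eq_zero.mp (le_antisymm hle (hterm n))).resolve_left (by positivity)

theorem Matrix.aeval_apply_eq_zero_of_pow_apply_eq_zero {R : Type*} [CommSemiring R]
    {A : Matrix ι ι R} {i j : ι} (h : ∀ n : ℕ, (A ^ n) i j = 0) (p : Polynomial R) : Polynomial.aeval A p i j = 0 := by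
  rw [Polynomial.aeval_eq_sum_range, Matrix.sum_apply]
  exact Finset.sum_eq_zero fun n _ => by rw [Matrix.smul_apply, h n, smul_zero]

theorem stmt9_general (N : ℕ) (B Q : Matrix (Fin N) (Fin N) ℝ)
    (hQ : IsZMatrix Q)
    (hQB : NormedSpace.exp (-Q) = B)
    (i j : Fin N) (hB0 : B i j = 0) :
    ∀ n : ℕ, 0 < n → (Q ^ n) i j = 0 := by
  obtain ⟨c, hM⟩ := hQ.exists_isNonnegMatrix_smul_one_sub
  have hexp : exp (c • 1 - Q) = Real.exp c • B := by
    rw [sub_eq_add_neg, Matrix.exp_smul_one_add, hQB]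
  have hMpow : ∀ m : ℕ, ((c • 1 - Q) ^ m) i j = 0 :=
    hM.pow_apply_eq_zero_of_exp_apply_eq_zero (by simp [hexp, hB0])
  have hQpoly : Q = Polynomial.aeval (c • 1 - Q) (Polynomial.C c - Polynomial.X) := by
    simp [Algebra.algebraMap_eq_smul_one]
  intro n _
  rw [hQpoly, ← map_pow]
  exact Matrix.aeval_apply_eq_zero_of_pow_apply_eq_zero hMpow _

theorem stmt9 (N : ℕ) (B Q : Matrix (Fin N) (Fin N) ℝ) (hBnn : IsNonnegMatrix B)
    (hBdiv : IsStronglyInfinitelyDivisible B) (hQ : IsZMatrix Q)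
    (hQB : NormedSpace.exp (-Q) = B)
    (i j : Fin N) (hij : i ≠ j) (hB0 : B i j = 0) :
    ∀ n : ℕ, 0 < n → (Q ^ n) i j = 0 :=
  stmt9_general N B Q hQ hQB i j hB0
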